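/- arXiv:0902.1046 — 3 statements merged into one kernel-verified Lean document; each statement's English description precedes it below -/
import Mathlib

section
/- For even x = 2n ≥ 6, ∑_{i=1}^{x/2} g₁(2i) = ∑_{3 ≤ p ≤ x/2, p prime} π₁(x − p) − C(π₁(x/2), 2), where C(m,2) = m(m−1)/2 is the binomial coefficient. -/
open Filter Finset Real Asymptotics

/-- `g1 n` is the number of unordered partitions of `n` into two odd primes:
pairs of odd primes `(p, q)` with `p ≤ q` and `p + q = n`. -/
noncomputable def g1 (n : ℕ) : ℕ :=
  {pq : ℕ × ℕ | pq.1.Prime ∧ Odd pq.1 ∧ pq.2.Prime ∧ Odd pq.2 ∧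
    pq.1 ≤ pq.2 ∧ pq.1 + pq.2 = n}.ncard

/-- `pi1 n` is the number of odd primes `≤ n`. -/
def pi1 (n : ℕ) : ℕ :=
  ((Finset.range (n + 1)).filter (fun p => p.Prime ∧ Odd p)).card

/-! Both sides count pairs `(p, q)` of odd primes. Grouping by `(p + q) / 2`, the left side counts
those with `p ≤ q` and `p + q ≤ x`. The sum over `p ≤ x / 2` counts those with `p + q ≤ x`; among
them, the ones with `p ≤ q` are exactly the pairs on the left, and the ones with `q < p` are exactly
the pairs `q < p ≤ x / 2`, of which there are `C(π₁(x / 2), 2)`. -/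

section

variable {α β : Type*}

lemma Finset.card_product_filter_gt [LinearOrder α] (s : Finset α) :
    #{x ∈ s ×ˢ s | x.2 < x.1} = (#s).choose 2 := by
  rw [← card_product_filter_lt]
  exact card_equiv (Equiv.prodComm α α) (by simp [and_comm])

lemma Finset.card_filter_product_eq_sum (s : Finset α) (t : Finset β) (P : α → β → Prop)
    [∀ a b, Decidable (P a b)] :
    #{x ∈ s ×ˢ t | P x.1 x.2} = ∑ a ∈ s, #{b ∈ t | P a b} := by
  simp only [card_filter, sum_product]

end

def oddPrimesLE (N : ℕ) : Finset ℕ := {p ∈ range (N + 1) | p.Prime ∧ Odd p}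

lemma mem_oddPrimesLE {N p : ℕ} : p ∈ oddPrimesLE N ↔ p ≤ N ∧ p.Prime ∧ Odd p := by
  simp [oddPrimesLE]

lemma three_le_of_mem_oddPrimesLE {N p : ℕ} (hp : p ∈ oddPrimesLE N) : 3 ≤ p := by
  obtain ⟨-, hp, hodd⟩ := mem_oddPrimesLE.1 hp
  have := hp.two_le
  have := Nat.odd_iff.1 hodd
  omega

lemma filter_prime_Icc_three (N : ℕ) : {p ∈ Icc 3 N | p.Prime} = oddPrimesLE N := by
  ext p
  simp only [mem_filter, mem_Icc, mem_oddPrimesLE]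
  constructor
  · rintro ⟨⟨h3, hN⟩, hp⟩
    exact ⟨hN, hp, hp.odd_of_ne_two (by omega)⟩
  · rintro ⟨hN, hp, hodd⟩
    exact ⟨⟨three_le_of_mem_oddPrimesLE (mem_oddPrimesLE.2 ⟨hN, hp, hodd⟩), hN⟩, hp⟩

lemma filter_add_le_oddPrimesLE (N p : ℕ) :
    {q ∈ oddPrimesLE N | p + q ≤ N} = oddPrimesLE (N - p) := by
  ext q
  simp only [mem_filter, mem_oddPrimesLE]
  grind

lemma g1_eq_card {m N : ℕ} (h : m ≤ N) :
    g1 m = #{pq ∈ oddPrimesLE N ×ˢ oddPrimesLE N | pq.1 ≤ pq.2 ∧ pq.1 + pq.2 = m} := by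
  rw [g1, ← Set.ncard_coe_finset]
  congr 1
  ext ⟨p, q⟩
  simp only [Set.mem_ofPred_eq, coe_filter, mem_product, mem_oddPrimesLE]
  grind

lemma sum_g1_two_mul (N : ℕ) :
    ∑ i ∈ Icc 1 (N / 2), g1 (2 * i) =
      #{pq ∈ oddPrimesLE N ×ˢ oddPrimesLE N | pq.1 ≤ pq.2 ∧ pq.1 + pq.2 ≤ N} := by
  have even_sum {pq : ℕ × ℕ} (h : pq ∈ oddPrimesLE N ×ˢ oddPrimesLE N) :
      (pq.1 + pq.2) % 2 = 0 := by
    rw [mem_product, mem_oddPrimesLE, mem_oddPrimesLE] at h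
    exact Nat.even_iff.1 (h.1.2.2.add_odd h.2.2.2)
  rw [card_eq_sum_card_fiberwise (f := fun pq => (pq.1 + pq.2) / 2) (t := Icc 1 (N / 2))]
  · refine sum_congr rfl fun i hi => ?_
    rw [mem_Icc] at hi
    rw [g1_eq_card (N := N) (by omega), filter_filter]
    refine congrArg card (filter_congr fun pq hpq => ?_)
    have := even_sum hpq
    omega
  · intro pq hpq
    rw [mem_coe, mem_filter] at hpq
    have := even_sum hpq.1
    have := three_le_of_mem_oddPrimesLE (mem_product.1 hpq.1).1
    rw [mem_coe, mem_Icc]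
    dsimp only
    omega

lemma sum_pi1_sub (N : ℕ) :
    ∑ p ∈ {p ∈ Icc 3 (N / 2) | p.Prime}, pi1 (N - p) =
      #{pq ∈ oddPrimesLE (N / 2) ×ˢ oddPrimesLE N | pq.1 + pq.2 ≤ N} := by
  rw [filter_prime_Icc_three, card_filter_product_eq_sum (P := fun p q => p + q ≤ N)]
  exact sum_congr rfl fun p _ => congrArg card (filter_add_le_oddPrimesLE N p).symm

lemma card_filter_add_le_eq_add_choose (N : ℕ) :
    #{pq ∈ oddPrimesLE (N / 2) ×ˢ oddPrimesLE N | pq.1 + pq.2 ≤ N} =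
      #{pq ∈ oddPrimesLE N ×ˢ oddPrimesLE N | pq.1 ≤ pq.2 ∧ pq.1 + pq.2 ≤ N} +
        (pi1 (N / 2)).choose 2 := by
  rw [pi1, ← oddPrimesLE, ← card_product_filter_gt,
    ← card_filter_add_card_filter_not (p := fun pq : ℕ × ℕ => pq.1 ≤ pq.2), filter_filter,
    filter_filter]
  congr 2 <;> ext ⟨p, q⟩ <;> simp only [mem_filter, mem_product, mem_oddPrimesLE] <;> grind

theorem goldbach_partial_sums_identity_general (x : ℕ) :
    (∑ i ∈ Finset.Icc 1 (x / 2), (g1 (2 * i) : ℤ)) =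
      (∑ p ∈ (Finset.Icc 3 (x / 2)).filter Nat.Prime, (pi1 (x - p) : ℤ)) -
        (Nat.choose (pi1 (x / 2)) 2 : ℤ) := by
  have key : ∑ i ∈ Icc 1 (x / 2), g1 (2 * i) + (pi1 (x / 2)).choose 2 =
      ∑ p ∈ {p ∈ Icc 3 (x / 2) | p.Prime}, pi1 (x - p) := by
    rw [sum_g1_two_mul, sum_pi1_sub, card_filter_add_le_eq_add_choose]
  rw [eq_sub_iff_add_eq]
  exact_mod_cast key

theorem goldbach_partial_sums_identity (x : ℕ) (hx : Even x) (hx6 : 6 ≤ x) :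
    (∑ i ∈ Finset.Icc 1 (x / 2), (g1 (2 * i) : ℤ)) =
      (∑ p ∈ (Finset.Icc 3 (x / 2)).filter Nat.Prime, (pi1 (x - p) : ℤ)) -
        (Nat.choose (pi1 (x / 2)) 2 : ℤ) :=
  goldbach_partial_sums_identity_general x
end

section
/- Let (a_n) be a sequence of positive reals with 1/a_n = O(1) as n → ∞, and suppose that for some ε > 0 one has ∑_{i=1}^{n} a_i = O(n (ln n)^{1−ε}). Then, as n → ∞, ∑_{i=3}^{n} (ln ln i / ln² i) · i·a_i ~ (ln ln n / ln² n) · ∑_{i=3}^{n} i·a_i. -/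
/-!
Write `w i = log log i / log² i`, `b i = i a_i`, `S n = ∑_{3 ≤ i ≤ n} b i`, and split
`∑_{3 ≤ i ≤ n} (w i - w n) b i` at `m = ⌊n / log² n⌋`. Below `m` the weights are bounded, and
since `∑_{i ≤ m} a_i = O(m log m)` the head is `O(n² / log³ n)`; as `a` is bounded below,
`S n ≫ n²`, so the head is `O(1 / (log n log log n))` times `w n S n`. Above `m` the weight is
decreasing (`log t / t²` decreases for `t ≥ √e`) and `log m = log n - 2 log log n + O(1)`, so
there `0 ≤ w i - w n ≤ ((log n / log m)² - 1) w n = o(w n)`.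
-/

open Filter Finset Real Asymptotics
open scoped Topology

theorem log_div_sq_antitoneOn :
    AntitoneOn (fun t : ℝ => log t / t ^ 2) (Set.Ici (exp 2⁻¹)) := by
  simpa only [rpow_two] using log_div_self_rpow_antitoneOn (a := 2) two_pos

theorem log_div_sq_nonneg {t : ℝ} (ht : 1 ≤ t) : 0 ≤ log t / t ^ 2 :=
  div_nonneg (log_nonneg ht) (sq_nonneg t)

theorem log_div_sq_le_one {t : ℝ} (ht : 1 ≤ t) : log t / t ^ 2 ≤ 1 := by
  rw [div_le_one (by positivity)]
  nlinarith [log_le_sub_one_of_pos (zero_lt_one.trans_le ht)]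

theorem log_div_sq_sub_le {s t : ℝ} (hs : 0 < s) (hst : s ≤ t) :
    log s / s ^ 2 - log t / t ^ 2 ≤ log t / t ^ 2 * ((t / s) ^ 2 - 1) := by
  have hlog : log s / s ^ 2 ≤ log t / s ^ 2 := by gcongr
  have ht : t ≠ 0 := (hs.trans_le hst).ne'
  calc log s / s ^ 2 - log t / t ^ 2 ≤ log t / s ^ 2 - log t / t ^ 2 := by linarith
    _ = log t / t ^ 2 * ((t / s) ^ 2 - 1) := by field_simp

theorem one_le_log_natCast {n : ℕ} (hn : 3 ≤ n) : 1 ≤ log n := by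
  rw [le_log_iff_exp_le (by positivity)]
  have : (3 : ℝ) ≤ n := by exact_mod_cast hn
  linarith [exp_one_lt_d9]

theorem tendsto_log_natCast_atTop : Tendsto (fun n : ℕ => log n) atTop atTop :=
  tendsto_log_atTop.comp tendsto_natCast_atTop_atTop

noncomputable def loglogWeight (x : ℝ) : ℝ := log (log x) / log x ^ 2

theorem loglogWeight_antitoneOn :
    AntitoneOn (fun i : ℕ => loglogWeight i) (Set.Ici ⌈exp (exp 2⁻¹)⌉₊) := by
  have hpos : ∀ i ∈ Set.Ici ⌈exp (exp 2⁻¹)⌉₊, (0 : ℝ) < i := fun i hi =>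
    (exp_pos _).trans_le (Nat.ceil_le.1 hi)
  have hlog : ∀ i ∈ Set.Ici ⌈exp (exp 2⁻¹)⌉₊, exp 2⁻¹ ≤ log i := fun i hi => by
    rw [le_log_iff_exp_le (hpos i hi)]
    exact Nat.ceil_le.1 hi
  intro i hi j hj hij
  exact log_div_sq_antitoneOn (hlog i hi) (hlog j hj)
    (log_le_log (hpos i hi) (by exact_mod_cast hij))

theorem abs_loglogWeight_sub_le_one {i n : ℕ} (hi : 3 ≤ i) (hn : 3 ≤ n) :
    |loglogWeight i - loglogWeight n| ≤ 1 :=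
  abs_sub_le_of_nonneg_of_le (log_div_sq_nonneg (one_le_log_natCast hi))
    (log_div_sq_le_one (one_le_log_natCast hi)) (log_div_sq_nonneg (one_le_log_natCast hn))
    (log_div_sq_le_one (one_le_log_natCast hn))

theorem loglogWeight_sub_le {m n : ℕ} (hm : 0 < log m) (hmn : log m ≤ log n) :
    loglogWeight m - loglogWeight n ≤ ((log n / log m) ^ 2 - 1) * loglogWeight n := by
  rw [mul_comm]
  exact log_div_sq_sub_le hm hmn

theorem abs_sum_mul_sub_le {w b : ℕ → ℝ} {k m n : ℕ} (hb : ∀ i, 0 ≤ b i) (hkm : k ≤ m)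
    (hmn : m ≤ n) (hw : ∀ i ∈ Icc k m, |w i - w n| ≤ 1) (hanti : AntitoneOn w (Set.Icc m n)) :
    |∑ i ∈ Icc k n, (w i - w n) * b i| ≤
      ∑ i ∈ Icc k m, b i + (w m - w n) * ∑ i ∈ Icc k n, b i := by
  have hsplit : ∑ i ∈ Icc k n, (w i - w n) * b i =
      ∑ i ∈ Icc k m, (w i - w n) * b i + ∑ i ∈ Ioc m n, (w i - w n) * b i := by
    rw [← Finset.sum_union (Finset.disjoint_left.2 fun i hi hi' => by
      simp only [mem_Icc, mem_Ioc] at hi hi'; omega)]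
    congr 1
    ext i; simp only [mem_Icc, mem_union, mem_Ioc]; omega
  have hhead : |∑ i ∈ Icc k m, (w i - w n) * b i| ≤ ∑ i ∈ Icc k m, b i := by
    refine (abs_sum_le_sum_abs _ _).trans (sum_le_sum fun i hi => ?_)
    rw [abs_mul, abs_of_nonneg (hb i)]
    exact mul_le_of_le_one_left (hb i) (hw i hi)
  have hmem : ∀ i ∈ Ioc m n, i ∈ Set.Icc m n := fun i hi => by
    simp only [mem_Ioc] at hi; exact ⟨hi.1.le, hi.2⟩
  have hn : n ∈ Set.Icc m n := ⟨hmn, le_rfl⟩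
  have htail :
      |∑ i ∈ Ioc m n, (w i - w n) * b i| ≤ (w m - w n) * ∑ i ∈ Icc k n, b i := by
    rw [abs_of_nonneg (sum_nonneg fun i hi => mul_nonneg
      (sub_nonneg.2 (hanti (hmem i hi) hn (mem_Ioc.1 hi).2)) (hb i))]
    calc ∑ i ∈ Ioc m n, (w i - w n) * b i ≤ ∑ i ∈ Ioc m n, (w m - w n) * b i :=
          sum_le_sum fun i hi => mul_le_mul_of_nonneg_right
            (sub_le_sub_right (hanti ⟨le_rfl, hmn⟩ (hmem i hi) (mem_Ioc.1 hi).1.le) _) (hb i)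
      _ ≤ (w m - w n) * ∑ i ∈ Icc k n, b i := by
          rw [← mul_sum]
          refine mul_le_mul_of_nonneg_left (sum_le_sum_of_subset_of_nonneg ?_
            fun i _ _ => hb i) (sub_nonneg.2 (hanti ⟨le_rfl, hmn⟩ hn hmn))
          intro i hi; simp only [mem_Ioc, mem_Icc] at hi ⊢; omega
  rw [hsplit]
  exact (abs_add_le _ _).trans (add_le_add hhead htail)

noncomputable def splitIndex (n : ℕ) : ℕ := ⌊(n : ℝ) / log n ^ 2⌋₊

theorem tendsto_natCast_div_log_sq_atTop :
    Tendsto (fun n : ℕ => (n : ℝ) / log n ^ 2) atTop atTop := by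
  refine ((tendsto_exp_div_pow_atTop 2).comp tendsto_log_natCast_atTop).congr' ?_
  filter_upwards [eventually_gt_atTop 0] with n hn
  simp [exp_log (Nat.cast_pos.2 hn)]

theorem splitIndex_le_div (n : ℕ) : (splitIndex n : ℝ) ≤ n / log n ^ 2 :=
  Nat.floor_le (by positivity)

theorem splitIndex_le {n : ℕ} (hn : 1 ≤ log n) : splitIndex n ≤ n := by
  have : (n : ℝ) / log n ^ 2 ≤ n := div_le_self (Nat.cast_nonneg n) (one_le_pow₀ hn)
  exact_mod_cast (splitIndex_le_div n).trans this

theorem tendsto_splitIndex : Tendsto splitIndex atTop atTop :=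
  tendsto_nat_floor_atTop.comp tendsto_natCast_div_log_sq_atTop

theorem tendsto_log_splitIndex_div_log :
    Tendsto (fun n => log (splitIndex n) / log n) atTop (𝓝 1) := by
  have hL := tendsto_log_natCast_atTop
  have hfloor :
      Tendsto (fun n => log (splitIndex n / ((n : ℝ) / log n ^ 2))) atTop (𝓝 0) := by
    simpa [splitIndex] using
      ((tendsto_nat_floor_div_atTop.comp tendsto_natCast_div_log_sq_atTop).log one_ne_zero)
  have hloglog : Tendsto (fun n : ℕ => log (log n) / log n) atTop (𝓝 0) :=
    isLittleO_log_id_atTop.tendsto_div_nhds_zero.comp hL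
  -- `log m / log n = 1 + log (m / x) / log n - 2 log log n / log n` with `x = n / log² n`
  have hlim := (hfloor.mul (tendsto_inv_atTop_zero.comp hL)).sub (hloglog.const_mul 2)
  have hlim1 := hlim.const_add 1
  rw [mul_zero, mul_zero, sub_zero, add_zero] at hlim1
  refine hlim1.congr' ?_
  filter_upwards [tendsto_splitIndex.eventually_gt_atTop 0, hL.eventually_gt_atTop 0,
    eventually_gt_atTop 0] with n hm hLpos hn
  have hn' : (0 : ℝ) < n := Nat.cast_pos.2 hn
  have hm' : (0 : ℝ) < splitIndex n := Nat.cast_pos.2 hm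
  simp only [Function.comp_apply]
  rw [log_div hm'.ne' (by positivity), log_div hn'.ne' (by positivity), log_pow]
  field_simp
  ring

noncomputable def splitError (K : ℝ) (n : ℕ) : ℝ :=
  K / (log (log n) * log n) + ((log n / log (splitIndex n)) ^ 2 - 1)

theorem tendsto_splitError (K : ℝ) : Tendsto (splitError K) atTop (𝓝 0) := by
  have hL := tendsto_log_natCast_atTop
  have h1 := ((tendsto_log_atTop.comp hL).atTop_mul_atTop₀ hL).const_div_atTop K
  have h2 := ((tendsto_log_splitIndex_div_log.inv₀ one_ne_zero).pow 2).sub_const 1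
  have h := h1.add h2
  rw [inv_one, one_pow, sub_self, add_zero] at h
  exact h.congr fun n => by simp [splitError, inv_div]

theorem exists_pos_eventually_le_of_isBigO_one_div {α : Type*} {l : Filter α} {a : α → ℝ}
    (ha : ∀ x, 0 < a x) (h : (fun x => 1 / a x) =O[l] (fun _ => (1 : ℝ))) :
    ∃ c > 0, ∀ᶠ x in l, c ≤ a x := by
  obtain ⟨B, hB, hbound⟩ := h.exists_pos
  refine ⟨1 / B, by positivity, ?_⟩
  filter_upwards [hbound.bound] with x hx
  rw [norm_one, mul_one, norm_of_nonneg (by have := ha x; positivity),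
    div_le_iff₀ (ha x)] at hx
  rwa [div_le_iff₀ hB, mul_comm]

theorem exists_pos_eventually_sum_le_mul_log {a : ℕ → ℝ} (ha : ∀ i, 0 ≤ a i) {ε : ℝ}
    (hε : 0 ≤ ε) (hsum : (fun n : ℕ => ∑ i ∈ Icc 1 n, a i) =O[atTop]
      (fun n : ℕ => (n : ℝ) * log n ^ ((1 : ℝ) - ε))) :
    ∃ C > 0, ∀ᶠ n : ℕ in atTop, ∑ i ∈ Icc 1 n, a i ≤ C * (n * log n) := by
  obtain ⟨C, hC, hbound⟩ := hsum.exists_pos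
  refine ⟨C, hC, ?_⟩
  filter_upwards [hbound.bound, eventually_ge_atTop 3] with n hn hn3
  have hL := one_le_log_natCast hn3
  have hrpow : log n ^ ((1 : ℝ) - ε) ≤ log n := by
    simpa using rpow_le_rpow_of_exponent_le hL (by linarith : (1 : ℝ) - ε ≤ 1)
  rw [norm_of_nonneg (sum_nonneg fun i _ => ha i),
    norm_of_nonneg (by positivity)] at hn
  exact hn.trans (by gcongr)

theorem mul_sq_le_sum_Icc_natCast_mul {a : ℕ → ℝ} {c : ℝ} {k N n : ℕ} (ha : ∀ i, 0 ≤ a i)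
    (hc : 0 ≤ c) (hac : ∀ i, N ≤ i → c ≤ a i) (hk : 2 * k ≤ n) (hN : 2 * N ≤ n) :
    c / 4 * n ^ 2 ≤ ∑ i ∈ Icc k n, (i : ℝ) * a i := by
  have hsub : Icc (n / 2 + 1) n ⊆ Icc k n := Icc_subset_Icc_left (by omega)
  have hterm : ∀ i ∈ Icc (n / 2 + 1) n, (n : ℝ) / 2 * c ≤ i * a i := fun i hi => by
    rw [mem_Icc] at hi
    have hi2 : (n : ℝ) / 2 ≤ i := by
      rw [div_le_iff₀ two_pos]; exact_mod_cast (by omega : n ≤ i * 2)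
    exact mul_le_mul hi2 (hac i (by omega)) hc (Nat.cast_nonneg i)
  have hcard : (n : ℝ) / 2 ≤ #(Icc (n / 2 + 1) n) := by
    rw [Nat.card_Icc, div_le_iff₀ two_pos]
    exact_mod_cast (by omega : n ≤ (n + 1 - (n / 2 + 1)) * 2)
  calc c / 4 * n ^ 2 = (n : ℝ) / 2 * ((n : ℝ) / 2 * c) := by ring
    _ ≤ #(Icc (n / 2 + 1) n) * ((n : ℝ) / 2 * c) := by gcongr
    _ ≤ ∑ i ∈ Icc (n / 2 + 1) n, (i : ℝ) * a i := by
        simpa using card_nsmul_le_sum _ _ _ hterm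
    _ ≤ ∑ i ∈ Icc k n, (i : ℝ) * a i :=
        sum_le_sum_of_subset_of_nonneg hsub fun i _ _ => mul_nonneg (Nat.cast_nonneg i) (ha i)

theorem sum_Icc_natCast_mul_le {a : ℕ → ℝ} {C : ℝ} {k m : ℕ} (ha : ∀ i, 0 ≤ a i) (hk : 1 ≤ k)
    (hm : ∑ i ∈ Icc 1 m, a i ≤ C * (m * log m)) :
    ∑ i ∈ Icc k m, (i : ℝ) * a i ≤ C * (m ^ 2 * log m) :=
  calc ∑ i ∈ Icc k m, (i : ℝ) * a i ≤ ∑ i ∈ Icc k m, (m : ℝ) * a i :=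
        sum_le_sum fun i hi => mul_le_mul_of_nonneg_right
          (by exact_mod_cast (mem_Icc.1 hi).2) (ha i)
    _ ≤ m * ∑ i ∈ Icc 1 m, a i := by
        rw [← mul_sum]
        exact mul_le_mul_of_nonneg_left (sum_le_sum_of_subset_of_nonneg
          (Icc_subset_Icc_left hk) fun i _ _ => ha i) (Nat.cast_nonneg m)
    _ ≤ C * (m ^ 2 * log m) := by
        nlinarith [mul_le_mul_of_nonneg_left hm (Nat.cast_nonneg (α := ℝ) m)]

theorem isLittleO_of_abs_le_mul {α : Type*} {l : Filter α} {f g ρ : α → ℝ}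
    (hρ : Tendsto ρ l (𝓝 0)) (h : ∀ᶠ x in l, |f x| ≤ ρ x * g x) : f =o[l] g := by
  have hρg : (fun x => ρ x * g x) =o[l] g := by
    simpa using (isLittleO_one_iff ℝ).2 hρ |>.mul_isBigO (isBigO_refl g l)
  refine IsBigO.trans_isLittleO (IsBigO.of_bound 1 ?_) hρg
  filter_upwards [h] with x hx
  rw [one_mul, norm_eq_abs, norm_eq_abs]
  exact hx.trans (le_abs_self _)

theorem eventually_abs_sum_sub_le_splitError {a : ℕ → ℝ} (ha : ∀ i, 0 ≤ a i) {c C : ℝ}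
    (hc : 0 < c) (hac : ∀ᶠ i in atTop, c ≤ a i) (hC : 0 ≤ C)
    (hA : ∀ᶠ k : ℕ in atTop, ∑ i ∈ Icc 1 k, a i ≤ C * (k * log k)) :
    ∀ᶠ n : ℕ in atTop, |∑ i ∈ Icc 3 n, (loglogWeight i - loglogWeight n) * (i * a i)| ≤
      splitError (4 * C / c) n * (loglogWeight n * ∑ i ∈ Icc 3 n, (i : ℝ) * a i) := by
  obtain ⟨N, hN⟩ := eventually_atTop.1 hac
  have hL := tendsto_log_natCast_atTop
  filter_upwards [eventually_ge_atTop (2 * N), eventually_ge_atTop 6,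
    hL.eventually_ge_atTop 1, (tendsto_log_atTop.comp hL).eventually_gt_atTop 0,
    tendsto_splitIndex.eventually (hA.and (eventually_ge_atTop 3)),
    tendsto_splitIndex.eventually (eventually_ge_atTop ⌈exp (exp 2⁻¹)⌉₊)]
    with n hnN hn6 hL1 hl ⟨hmA, hm3⟩ hmexp
  replace hl : 0 < log (log n) := hl
  have hb : ∀ i : ℕ, 0 ≤ (i : ℝ) * a i := fun i => mul_nonneg (Nat.cast_nonneg i) (ha i)
  set m := splitIndex n
  set L := log n
  set S := ∑ i ∈ Icc 3 n, (i : ℝ) * a i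
  have hmn : m ≤ n := splitIndex_le hL1
  have hlogm : 0 < log m := zero_lt_one.trans_le (one_le_log_natCast hm3)
  have hlogmL : log m ≤ L := log_le_log (by positivity) (by exact_mod_cast hmn)
  have hS : c / 4 * n ^ 2 ≤ S := mul_sq_le_sum_Icc_natCast_mul ha hc.le hN (by omega) hnN
  have hhead : ∑ i ∈ Icc 3 m, (i : ℝ) * a i ≤
      4 * C / c / (log L * L) * (loglogWeight n * S) :=
    calc ∑ i ∈ Icc 3 m, (i : ℝ) * a i ≤ C * (m ^ 2 * log m) :=
          sum_Icc_natCast_mul_le ha (by norm_num) hmA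
      _ ≤ C * ((n / L ^ 2) ^ 2 * L) := by gcongr; exact splitIndex_le_div n
      _ = 4 * C / c / (log L * L) * (log L / L ^ 2 * (c / 4 * n ^ 2)) := by field_simp
      _ ≤ 4 * C / c / (log L * L) * (loglogWeight n * S) := by unfold loglogWeight; gcongr
  have htail : (loglogWeight m - loglogWeight n) * S ≤
      ((L / log m) ^ 2 - 1) * (loglogWeight n * S) := by
    rw [← mul_assoc]
    exact mul_le_mul_of_nonneg_right (loglogWeight_sub_le hlogm hlogmL)
      (sum_nonneg fun i _ => hb i)
  calc |∑ i ∈ Icc 3 n, (loglogWeight i - loglogWeight n) * (i * a i)|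
      ≤ ∑ i ∈ Icc 3 m, (i : ℝ) * a i + (loglogWeight m - loglogWeight n) * S :=
        abs_sum_mul_sub_le hb hm3 hmn
          (fun i hi => abs_loglogWeight_sub_le_one (mem_Icc.1 hi).1 (by omega))
          (loglogWeight_antitoneOn.mono fun i hi => hmexp.trans hi.1)
    _ ≤ splitError (4 * C / c) n * (loglogWeight n * S) := by
        rw [splitError, add_mul]
        exact add_le_add hhead htail

theorem stolz_type_lemma (a : ℕ → ℝ) (ha : ∀ n, 0 < a n)
    (hbd : (fun n : ℕ => 1 / a n) =O[atTop] (fun _ : ℕ => (1 : ℝ)))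
    (ε : ℝ) (hε : 0 < ε)
    (hsum : (fun n : ℕ => ∑ i ∈ Finset.Icc 1 n, a i) =O[atTop]
      (fun n : ℕ => (n : ℝ) * (Real.log n) ^ ((1 : ℝ) - ε))) :
    (fun n : ℕ => ∑ i ∈ Finset.Icc 3 n,
        Real.log (Real.log i) / (Real.log i) ^ 2 * ((i : ℝ) * a i)) ~[atTop]
    (fun n : ℕ => Real.log (Real.log n) / (Real.log n) ^ 2 *
        ∑ i ∈ Finset.Icc 3 n, (i : ℝ) * a i) := by
  have ha' : ∀ i, 0 ≤ a i := fun i => (ha i).le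
  obtain ⟨c, hc, hac⟩ := exists_pos_eventually_le_of_isBigO_one_div ha hbd
  obtain ⟨C, hC, hA⟩ := exists_pos_eventually_sum_le_mul_log ha' hε.le hsum
  refine isLittleO_of_abs_le_mul (tendsto_splitError (4 * C / c)) ?_
  filter_upwards [eventually_abs_sum_sub_le_splitError ha' hc hac hC.le hA] with n hn
  simp only [loglogWeight] at hn
  convert hn using 2
  rw [Pi.sub_apply, mul_sum, ← sum_sub_distrib]
  simp only [sub_mul]
end

section
/- For x ≡ 1 (mod 4), ∑_{i=0}^{(x−1)/4} q(4i+1) = ∑_{k=1}^{⌊(1+√x)/2⌋} ⌊(1 + √(2x − (2k−1)²))/2⌋ − C(⌊(1+√x)/2⌋, 2), where C(m,2) = m(m−1)/2 is the binomial coefficient; consequently, as x → ∞ through x ≡ 1 (mod 4), ∑_{i=0}^{(x−1)/4} q(4i+1) = (π/16)·x + O(√x). -/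
/-!
Since `a² + b² ≡ 1 (mod 4)` exactly when `a + b` is odd, the partial sum counts the pairs
`a ≤ b` with `a + b` odd and `a² + b² ≤ x`. Writing `(a, b) = (j - k, j + k + 1)` turns these
into the pairs `k ≤ j` with `(2k+1)² + (2j+1)² ≤ 2x`; for fixed `k` there are
`⌊(1 + √(2x - (2k+1)²))/2⌋ - k` of them, and the terms `-k` add up to `-C(K, 2)`.

For the asymptotics, each floor is half the square root up to `1/2`; the sum over `t = 1, …, K`
of the decreasing function `√(2x - (2t-1)²)` is its integral over `[1/2, (1+√x)/2]` up to
`O(√x)`, and that integral is `πx/8 + x/4` (an arcsine primitive). As `C(K, 2) = x/8 + O(√x)`,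
the total is `(πx/8 + x/4)/2 - x/8 + O(√x) = πx/16 + O(√x)`.
-/

open Filter Finset Real Asymptotics

/-- `twoSquaresQ n` is the number of unordered representations of `n` as a sum of two
squares of nonnegative integers: pairs `(a, b)` with `a ≤ b` and `a² + b² = n`. -/
noncomputable def twoSquaresQ (n : ℕ) : ℕ :=
  {ab : ℕ × ℕ | ab.1 ≤ ab.2 ∧ ab.1 ^ 2 + ab.2 ^ 2 = n}.ncard

lemma twoSquaresQ_eq_card_filter {n N : ℕ} (hn : n ≤ N) :
    twoSquaresQ n =
      #{p ∈ range (N + 1) ×ˢ range (N + 1) | p.1 ≤ p.2 ∧ p.1 ^ 2 + p.2 ^ 2 = n} := by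
  rw [twoSquaresQ, ← Set.ncard_coe_finset]
  congr 1
  ext ⟨a, b⟩
  have := Nat.le_self_pow two_ne_zero a
  have := Nat.le_self_pow two_ne_zero b
  simp only [Set.mem_ofPred_eq, coe_filter, mem_product, mem_range]
  exact ⟨fun h => ⟨⟨by omega, by omega⟩, h⟩, fun h => h.2⟩

lemma sum_twoSquaresQ_eq_card {S : Finset ℕ} {N : ℕ} (hS : ∀ m ∈ S, m ≤ N) :
    ∑ m ∈ S, twoSquaresQ m =
      #{p ∈ range (N + 1) ×ˢ range (N + 1) | p.1 ≤ p.2 ∧ p.1 ^ 2 + p.2 ^ 2 ∈ S} := by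
  rw [card_eq_sum_card_fiberwise (f := fun p => p.1 ^ 2 + p.2 ^ 2) (t := S)
    fun p hp => (mem_filter.1 hp).2.2]
  refine sum_congr rfl fun m hm => ?_
  rw [twoSquaresQ_eq_card_filter (hS m hm), filter_filter]
  congr 1
  refine filter_congr fun p _ => ⟨fun h => ⟨⟨h.1, h.2 ▸ hm⟩, h.2⟩, fun h => ⟨h.1.1, h.2⟩⟩

lemma sq_add_sq_mod_four_eq_one_iff (a b : ℕ) :
    (a ^ 2 + b ^ 2) % 4 = 1 ↔ (a + b) % 2 = 1 := by
  rcases Nat.even_or_odd a with ⟨k, rfl⟩ | ⟨k, rfl⟩ <;>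
    rcases Nat.even_or_odd b with ⟨l, rfl⟩ | ⟨l, rfl⟩ <;> ring_nf <;> omega

lemma sum_twoSquaresQ_four_mul_add_one_eq_card {x : ℕ} (hx : x % 4 = 1) :
    ∑ i ∈ range ((x - 1) / 4 + 1), twoSquaresQ (4 * i + 1) =
      #{p ∈ range (x + 1) ×ˢ range (x + 1) |
        p.1 ≤ p.2 ∧ p.1 ^ 2 + p.2 ^ 2 ≤ x ∧ (p.1 + p.2) % 2 = 1} := by
  have hinj : Set.InjOn (fun i => 4 * i + 1) (range ((x - 1) / 4 + 1)) := fun i _ j _ h => by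
    simp_all
  rw [← sum_image hinj, sum_twoSquaresQ_eq_card (N := x) (by simp; omega)]
  congr 1
  refine filter_congr fun p _ => and_congr_right fun _ => ?_
  rw [← sq_add_sq_mod_four_eq_one_iff]
  simp only [mem_image, mem_range]
  exact ⟨fun ⟨i, hi, h⟩ => by omega, fun h => ⟨(p.1 ^ 2 + p.2 ^ 2) / 4, by omega, by omega⟩⟩

lemma Nat.odd_sq_le_iff {j m : ℕ} : (2 * j + 1) ^ 2 ≤ m ↔ j < (Nat.sqrt m + 1) / 2 := by
  rw [← Nat.le_sqrt']; omega

lemma Nat.sub_sq_add_add_sq {a b : ℕ} (h : a ≤ b) :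
    (b - a) ^ 2 + (a + b) ^ 2 = 2 * (a ^ 2 + b ^ 2) := by
  zify [h]; ring

lemma card_odd_add_sq_add_sq_le_eq_sum (x : ℕ) :
    #{p ∈ range (x + 1) ×ˢ range (x + 1) |
        p.1 ≤ p.2 ∧ p.1 ^ 2 + p.2 ^ 2 ≤ x ∧ (p.1 + p.2) % 2 = 1} =
      ∑ k ∈ range ((Nat.sqrt x + 1) / 2),
        ((Nat.sqrt (2 * x - (2 * k + 1) ^ 2) + 1) / 2 - k) := by
  rw [sum_congr rfl fun k _ => (Nat.card_Ico k _).symm, ← card_sigma]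
  refine card_nbij' (fun p => ⟨(p.2 - p.1 - 1) / 2, (p.1 + p.2 - 1) / 2⟩)
    (fun q => (q.2 - q.1, q.2 + q.1 + 1)) ?_ ?_ ?_ ?_
  · rintro ⟨a, b⟩ hp
    simp only [coe_filter, mem_product, mem_range, Set.mem_ofPred_eq] at hp
    obtain ⟨-, hab, hx, hodd⟩ := hp
    have hkey := Nat.sub_sq_add_add_sq hab
    have : a ^ 2 + b ^ 2 ≤ (a + b) ^ 2 := by rw [add_sq]; omega
    have hk : 2 * ((b - a - 1) / 2) + 1 = b - a := by omega
    have hj : 2 * ((a + b - 1) / 2) + 1 = a + b := by omega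
    simp only [coe_sigma, Set.mem_sigma_iff, coe_range, Set.mem_Iio, coe_Ico, Set.mem_Ico,
      ← Nat.odd_sq_le_iff, hk, hj]
    omega
  · rintro ⟨k, j⟩ hq
    simp only [coe_sigma, Set.mem_sigma_iff, coe_range, Set.mem_Iio, coe_Ico, Set.mem_Ico,
      ← Nat.odd_sq_le_iff] at hq
    obtain ⟨hk, hkj, hj⟩ := hq
    have hkey := Nat.sub_sq_add_add_sq (show j - k ≤ j + k + 1 by omega)
    have hsub : j + k + 1 - (j - k) = 2 * k + 1 := by omega
    have hadd : j - k + (j + k + 1) = 2 * j + 1 := by omega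
    rw [hsub, hadd] at hkey
    have := Nat.le_self_pow two_ne_zero (j - k)
    have := Nat.le_self_pow two_ne_zero (j + k + 1)
    simp only [coe_filter, mem_product, mem_range, Set.mem_ofPred_eq]
    omega
  · rintro ⟨a, b⟩ hp
    simp only [coe_filter, mem_product, mem_range, Set.mem_ofPred_eq] at hp
    simp only [Prod.mk.injEq]
    omega
  · rintro ⟨k, j⟩ hq
    simp only [coe_sigma, Set.mem_sigma_iff, coe_range, Set.mem_Iio, coe_Ico, Set.mem_Ico] at hq
    simp only [Sigma.mk.injEq, heq_eq_eq]
    omega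

lemma Nat.floor_one_add_sqrt_div_two (m : ℕ) : ⌊(1 + √(m : ℝ)) / 2⌋₊ = (Nat.sqrt m + 1) / 2 := by
  rw [Nat.floor_div_ofNat, add_comm, Nat.floor_add_one (Real.sqrt_nonneg _),
    Real.nat_floor_real_sqrt_eq_nat_sqrt]

lemma Finset.sum_Icc_one_eq_sum_range {M : Type*} [AddCommMonoid M] (f : ℕ → M) (n : ℕ) :
    ∑ k ∈ Icc 1 n, f k = ∑ k ∈ range n, f (k + 1) := by
  rw [range_eq_Ico, sum_Ico_add', ← Ico_add_one_right_eq_Icc]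

lemma Finset.sum_range_id_eq_choose_two (n : ℕ) : ∑ i ∈ range n, i = n.choose 2 := by
  rw [sum_range_id, Nat.choose_two_right]

theorem sum_twoSquaresQ_four_mul_add_one_eq_sum_sub_choose {x : ℕ} (hx : x % 4 = 1) :
    (∑ i ∈ range ((x - 1) / 4 + 1), (twoSquaresQ (4 * i + 1) : ℤ)) =
      (∑ k ∈ Icc 1 ⌊(1 + √x) / 2⌋₊,
        (⌊(1 + √(2 * (x : ℝ) - (2 * (k : ℝ) - 1) ^ 2)) / 2⌋₊ : ℤ)) -
      (Nat.choose ⌊(1 + √x) / 2⌋₊ 2 : ℤ) := by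
  have hK : ⌊(1 + √x) / 2⌋₊ = (Nat.sqrt x + 1) / 2 := Nat.floor_one_add_sqrt_div_two x
  have hsq : ∀ k ∈ range ((Nat.sqrt x + 1) / 2), (2 * k + 1) ^ 2 ≤ x := fun k hk =>
    Nat.odd_sq_le_iff.2 (mem_range.1 hk)
  have hfloor : ∀ k ∈ range ((Nat.sqrt x + 1) / 2),
      ⌊(1 + √(2 * (x : ℝ) - (2 * ((k + 1 : ℕ) : ℝ) - 1) ^ 2)) / 2⌋₊ =
        (Nat.sqrt (2 * x - (2 * k + 1) ^ 2) + 1) / 2 := fun k hk => by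
    rw [← Nat.floor_one_add_sqrt_div_two, Nat.cast_sub (by linarith [hsq k hk])]
    push_cast
    ring_nf
  have hle : ∀ k ∈ range ((Nat.sqrt x + 1) / 2),
      k ≤ (Nat.sqrt (2 * x - (2 * k + 1) ^ 2) + 1) / 2 := fun k hk =>
    (Nat.odd_sq_le_iff.1 (by have := hsq k hk; omega)).le
  rw [← Nat.cast_sum, sum_twoSquaresQ_four_mul_add_one_eq_card hx,
    card_odd_add_sq_add_sq_le_eq_sum, hK,
    sum_Icc_one_eq_sum_range, ← sum_range_id_eq_choose_two, Nat.cast_sum, Nat.cast_sum,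
    ← sum_sub_distrib]
  refine sum_congr rfl fun k hk => ?_
  rw [hfloor k hk, Nat.cast_sub (hle k hk)]

theorem AntitoneOn.abs_sum_range_sub_integral_le {f : ℝ → ℝ} {x₀ : ℝ} {n : ℕ}
    (hf : AntitoneOn f (Set.Icc x₀ (x₀ + n))) :
    |∑ i ∈ range n, f (x₀ + i) - ∫ x in x₀..x₀ + n, f x| ≤ f x₀ - f (x₀ + n) := by
  have hlow := hf.integral_le_sum
  have hup := hf.sum_le_integral
  have hshift : ∑ i ∈ range n, f (x₀ + i) + f (x₀ + n) =
      f x₀ + ∑ i ∈ range n, f (x₀ + ↑(i + 1)) := by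
    rw [← sum_range_succ (fun i => f (x₀ + i)), sum_range_succ']
    simp [add_comm]
  have hmono : f (x₀ + n) ≤ f x₀ :=
    hf ⟨le_rfl, by simp⟩ ⟨by simp, le_rfl⟩ (by simp)
  rw [abs_le]
  constructor <;> linarith

theorem abs_intervalIntegral_sub_intervalIntegral_le {f : ℝ → ℝ} {C : ℝ} (hf : Continuous f)
    (hC : ∀ x, |f x| ≤ C) (a b c d : ℝ) :
    |(∫ x in a..b, f x) - ∫ x in c..d, f x| ≤ C * |c - a| + C * |d - b| := by
  have hint : ∀ a b : ℝ, IntervalIntegrable f MeasureTheory.volume a b :=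
    hf.intervalIntegrable
  have hbound : ∀ a b : ℝ, |∫ x in a..b, f x| ≤ C * |b - a| := fun a b => by
    simpa only [Real.norm_eq_abs] using
      intervalIntegral.norm_integral_le_of_norm_le_const (a := a) (b := b) fun x _ =>
        (Real.norm_eq_abs (f x)).trans_le (hC x)
  rw [intervalIntegral.integral_interval_sub_interval_comm (hint a b) (hint c d) (hint a c)]
  exact (abs_sub _ _).trans (add_le_add (hbound a c) (hbound b d))

theorem hasDerivAt_primitive_sqrt_sq_sub_sq {r u : ℝ} (hu : |u| < r) :
    HasDerivAt (fun u => r ^ 2 / 2 * arcsin (u / r) + u * √(r ^ 2 - u ^ 2) / 2)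
      √(r ^ 2 - u ^ 2) u := by
  have hr : 0 < r := (abs_nonneg u).trans_lt hu
  have hw : 0 < r ^ 2 - u ^ 2 := by
    have := sq_lt_sq' (neg_lt_of_abs_lt hu) (lt_of_abs_lt hu); linarith
  have hur : |u / r| < 1 := by rwa [abs_div, abs_of_pos hr, div_lt_one hr]
  have harcsin : HasDerivAt (fun u => arcsin (u / r)) (1 / √(1 - (u / r) ^ 2) * (1 / r)) u :=
    (hasDerivAt_arcsin (by linarith [neg_abs_le (u / r)])
      (by linarith [le_abs_self (u / r)])).comp u ((hasDerivAt_id' u).div_const r)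
  have hsqrt : HasDerivAt (fun u => √(r ^ 2 - u ^ 2)) (-(2 * u) / (2 * √(r ^ 2 - u ^ 2))) u := by
    simpa using (((hasDerivAt_id' u).pow 2).const_sub (r ^ 2)).sqrt hw.ne'
  refine ((harcsin.const_mul (r ^ 2 / 2)).add
    (((hasDerivAt_id' u).mul hsqrt).div_const 2)).congr_deriv ?_
  have h1 : 1 - (u / r) ^ 2 = (r ^ 2 - u ^ 2) / r ^ 2 := by field_simp
  have hsq := Real.sq_sqrt hw.le
  rw [h1, Real.sqrt_div hw.le, Real.sqrt_sq hr.le]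
  field_simp
  linear_combination -hsq

theorem integral_sqrt_sq_sub_sq {r a : ℝ} (ha : 0 ≤ a) (har : a ≤ r) :
    ∫ u in (0 : ℝ)..a, √(r ^ 2 - u ^ 2) =
      r ^ 2 / 2 * arcsin (a / r) + a * √(r ^ 2 - a ^ 2) / 2 := by
  have hcont : Continuous fun u : ℝ => √(r ^ 2 - u ^ 2) := by fun_prop
  rw [intervalIntegral.integral_eq_sub_of_hasDerivAt_of_le ha (by fun_prop)
    (fun u hu => hasDerivAt_primitive_sqrt_sq_sub_sq (by
      rw [abs_of_pos hu.1]; exact hu.2.trans_le har))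
    (hcont.intervalIntegrable _ _)]
  simp

theorem arcsin_sqrt_div_sqrt_two_mul {x : ℝ} (hx : 0 < x) : arcsin (√x / √(2 * x)) = π / 4 := by
  have hsqrt2 : √2 ^ 2 = 2 := Real.sq_sqrt zero_le_two
  rw [Real.sqrt_mul zero_le_two, div_mul_cancel_right₀ (Real.sqrt_pos.2 hx).ne',
    show (√2)⁻¹ = √2 / 2 by field_simp; linear_combination -hsqrt2, ← sin_pi_div_four,
    arcsin_sin (by linarith [pi_pos]) (by linarith [pi_pos])]

theorem integral_sqrt_two_mul_sub_sq {x : ℝ} (hx : 0 ≤ x) :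
    ∫ t in (1 / 2 : ℝ)..(1 + √x) / 2, √(2 * x - (2 * t - 1) ^ 2) = π * x / 8 + x / 4 := by
  have h := integral_sqrt_sq_sub_sq (sqrt_nonneg x) (Real.sqrt_le_sqrt (by linarith : x ≤ 2 * x))
  rw [Real.sq_sqrt (by positivity), Real.sq_sqrt hx, show 2 * x - x = x by ring] at h
  rw [intervalIntegral.integral_comp_mul_sub (fun u => √(2 * x - u ^ 2)) two_ne_zero 1,
    show 2 * (1 / 2 : ℝ) - 1 = 0 by norm_num, show 2 * ((1 + √x) / 2) - 1 = √x by ring, h,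
    smul_eq_mul, Real.mul_self_sqrt hx]
  rcases hx.eq_or_lt with rfl | hx
  · simp
  rw [arcsin_sqrt_div_sqrt_two_mul hx]
  ring

theorem abs_sum_sqrt_two_mul_sub_sq_sub_le {x : ℝ} (hx : 0 ≤ x) :
    |∑ k ∈ Icc 1 ⌊(1 + √x) / 2⌋₊, √(2 * x - (2 * (k : ℝ) - 1) ^ 2) - (π * x / 8 + x / 4)| ≤
      5 * √x := by
  set K := ⌊(1 + √x) / 2⌋₊
  have hK : (K : ℝ) ≤ (1 + √x) / 2 := Nat.floor_le (by positivity)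
  have hK' : (1 + √x) / 2 < K + 1 := Nat.lt_floor_add_one _
  let g : ℝ → ℝ := fun t => √(2 * x - (2 * t - 1) ^ 2)
  have hg_le : ∀ t, |g t| ≤ 2 * √x := fun t => by
    rw [abs_of_nonneg (sqrt_nonneg _)]
    exact Real.sqrt_le_iff.2 ⟨by positivity, by nlinarith [Real.sq_sqrt hx, sq_nonneg (2 * t - 1)]⟩
  have hg_anti : AntitoneOn g (Set.Ici (1 / 2)) := fun a ha b hb hab =>
    Real.sqrt_le_sqrt (by simp only [Set.mem_Ici] at ha hb; nlinarith)
  have hsum : ∑ k ∈ Icc 1 K, √(2 * x - (2 * (k : ℝ) - 1) ^ 2) = ∑ i ∈ range K, g (1 + i) := by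
    rw [sum_Icc_one_eq_sum_range]
    push_cast
    simp only [g, add_comm]
  have hsum_int := (hg_anti.mono fun t ht => show (1 / 2 : ℝ) ≤ t by
    linarith [ht.1]).abs_sum_range_sub_integral_le (x₀ := 1) (n := K)
  have hint := abs_intervalIntegral_sub_intervalIntegral_le (by fun_prop) hg_le
    1 (1 + K) (1 / 2) ((1 + √x) / 2)
  rw [integral_sqrt_two_mul_sub_sq hx] at hint
  have h1 : |(1 / 2 : ℝ) - 1| = 1 / 2 := by norm_num
  have h2 : |(1 + √x) / 2 - (1 + K)| ≤ 1 := abs_le.2 ⟨by linarith, by linarith⟩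
  have hg1 := (abs_le.1 (hg_le 1)).2
  have hgK : 0 ≤ g (1 + K) := sqrt_nonneg _
  have := mul_le_mul_of_nonneg_left h2 (by positivity : 0 ≤ 2 * √x)
  rw [h1, abs_le] at hint
  rw [abs_le] at hsum_int
  rw [hsum, abs_le]
  constructor <;> linarith

lemma abs_sum_natFloor_one_add_div_two_sub_le {ι : Type*} (s : Finset ι) {f : ι → ℝ}
    (hf : ∀ i ∈ s, 0 ≤ f i) :
    |∑ i ∈ s, (⌊(1 + f i) / 2⌋₊ : ℝ) - (∑ i ∈ s, f i) / 2| ≤ #s / 2 := by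
  rw [sum_div, ← sum_sub_distrib]
  calc _ ≤ ∑ i ∈ s, |(⌊(1 + f i) / 2⌋₊ : ℝ) - f i / 2| := abs_sum_le_sum_abs _ _
    _ ≤ ∑ _i ∈ s, (1 / 2 : ℝ) := sum_le_sum fun i hi => by
        have h1 := Nat.floor_le (show 0 ≤ (1 + f i) / 2 by linarith [hf i hi])
        have h2 := Nat.lt_floor_add_one ((1 + f i) / 2)
        exact abs_le.2 ⟨by linarith, by linarith⟩
    _ = #s / 2 := by rw [sum_const, nsmul_eq_mul]; ring

lemma abs_choose_two_natFloor_sub_le {x : ℝ} (hx : 0 ≤ x) :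
    |(Nat.choose ⌊(1 + √x) / 2⌋₊ 2 : ℝ) - x / 8| ≤ (√x + 1) / 2 := by
  have hK := Nat.floor_le (show 0 ≤ (1 + √x) / 2 by positivity)
  have hK' := Nat.lt_floor_add_one ((1 + √x) / 2)
  have hs := Real.sq_sqrt hx
  have := sqrt_nonneg x
  rw [Nat.cast_choose_two, abs_le]
  constructor <;> nlinarith

theorem abs_sum_twoSquaresQ_sub_le {x : ℕ} (hx : x % 4 = 1) :
    |∑ i ∈ range ((x - 1) / 4 + 1), (twoSquaresQ (4 * i + 1) : ℝ) - π / 16 * x| ≤ 4 * √x := by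
  have hid : ∑ i ∈ range ((x - 1) / 4 + 1), (twoSquaresQ (4 * i + 1) : ℝ) =
      ∑ k ∈ Icc 1 ⌊(1 + √x) / 2⌋₊, (⌊(1 + √(2 * (x : ℝ) - (2 * (k : ℝ) - 1) ^ 2)) / 2⌋₊ : ℝ) -
        (Nat.choose ⌊(1 + √x) / 2⌋₊ 2 : ℝ) := by
    exact_mod_cast sum_twoSquaresQ_four_mul_add_one_eq_sum_sub_choose hx
  have hfloor := abs_sum_natFloor_one_add_div_two_sub_le (Icc 1 ⌊(1 + √x) / 2⌋₊)
    (f := fun k : ℕ => √(2 * (x : ℝ) - (2 * (k : ℝ) - 1) ^ 2)) fun _ _ => sqrt_nonneg _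
  have hsqrt := abs_sum_sqrt_two_mul_sub_sq_sub_le (Nat.cast_nonneg (α := ℝ) x)
  have hchoose := abs_choose_two_natFloor_sub_le (Nat.cast_nonneg (α := ℝ) x)
  have hK := Nat.floor_le (show 0 ≤ (1 + √(x : ℝ)) / 2 by positivity)
  have hx1 : 1 ≤ √(x : ℝ) := Real.one_le_sqrt.2 (by exact_mod_cast (by omega : 1 ≤ x))
  rw [Nat.card_Icc, Nat.add_sub_cancel] at hfloor
  rw [abs_le] at hfloor hsqrt hchoose
  rw [hid, abs_le]
  constructor <;> linarith

theorem two_squares_partial_sums :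
    (∀ x : ℕ, x % 4 = 1 →
      (∑ i ∈ Finset.range ((x - 1) / 4 + 1), (twoSquaresQ (4 * i + 1) : ℤ)) =
        (∑ k ∈ Finset.Icc 1 ⌊(1 + Real.sqrt x) / 2⌋₊,
          (⌊(1 + Real.sqrt (2 * (x : ℝ) - (2 * (k : ℝ) - 1) ^ 2)) / 2⌋₊ : ℤ)) -
        (Nat.choose ⌊(1 + Real.sqrt x) / 2⌋₊ 2 : ℤ)) ∧
    (fun x : ℕ =>
        (∑ i ∈ Finset.range ((x - 1) / 4 + 1), (twoSquaresQ (4 * i + 1) : ℝ)) -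
        Real.pi / 16 * x)
      =O[atTop ⊓ 𝓟 {x : ℕ | x % 4 = 1}] (fun x : ℕ => Real.sqrt x) := by
  refine ⟨fun x hx => sum_twoSquaresQ_four_mul_add_one_eq_sum_sub_choose hx,
    IsBigO.of_bound 4 ?_⟩
  rw [eventually_inf_principal]
  refine Eventually.of_forall fun x hx => ?_
  rw [Real.norm_eq_abs, Real.norm_of_nonneg (sqrt_nonneg _)]
  exact abs_sum_twoSquaresQ_sub_le hx
end
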